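/- For every integer n ≥ 1 and every p ∈ I_n, one has w_{p,1} = 1 − (p_n + p_n') h_{p,0} > 0 and the one-block identity M1^{p_n} M3^{p_n'} M2^{q_n} · (s_{T(p)}, h_{T(p),0}, 1 − s_{T(p)})ᵀ = (1/w_{p,1}) · (s_p, h_{p,0}, 1 − s_p)ᵀ, where T(p) ∈ I_n is the shift of p. -/

import Mathlib

open Matrix

noncomputable section

/-- `M1 = [[1,1,0],[0,1,0],[0,0,1]]`. -/
def M1 : Matrix (Fin 3) (Fin 3) ℝ := !![1, 1, 0; 0, 1, 0; 0, 0, 1]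

/-- `M2 = [[1,0,0],[1,1,1],[0,0,1]]`. -/
def M2 : Matrix (Fin 3) (Fin 3) ℝ := !![1, 0, 0; 1, 1, 1; 0, 0, 1]

/-- `M3 = [[1,0,0],[0,1,0],[0,1,1]]`. -/
def M3 : Matrix (Fin 3) (Fin 3) ℝ := !![1, 0, 0; 0, 1, 0; 0, 1, 1]

/- A tuple `p = (p_n, p_n', q_n, …, p_1, p_1', q_1) ∈ ℕ₀^{3n}` is encoded by three
functions `P P' Q : Fin n → ℕ`, where the index `i : Fin n` corresponds to the
subscript `i + 1` (so `P ⟨0,_⟩ = p_1`, …, `P ⟨n-1,_⟩ = p_n`). -/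

/-- The transition matrix `M_p = M1^{p_n} M3^{p_n'} M2^{q_n} ⋯ M1^{p_1} M3^{p_1'} M2^{q_1}`. -/
def Mp (n : ℕ) (P P' Q : Fin n → ℕ) : Matrix (Fin 3) (Fin 3) ℝ :=
  ((List.finRange n).map fun i => M1 ^ P i.rev * M3 ^ P' i.rev * M2 ^ Q i.rev).prod

/-- Membership of the tuple `p` in `I_n`. -/
def memI (n : ℕ) (P P' Q : Fin n → ℕ) : Prop :=
  (∀ i, 0 < Q i) ∧ (∀ i, 0 < P i + P' i) ∧ (∃ j, 0 < P j) ∧ (∃ k, 0 < P' k)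

/-- Finite continued fraction: `cf [a₁, …, a_m] x = 1/(a₁ + 1/(a₂ + ⋯ + 1/(a_m + x)))`. -/
def cf (l : List ℕ) (x : ℝ) : ℝ := l.foldr (fun a y => 1 / (a + y)) x

/-- The (0-indexed) block index `k(j+1) - 1 = n - 1 - (j mod n)` used at step `j + 1`. -/
def blk (n : ℕ) (hn : 0 < n) (j : ℕ) : Fin n :=
  ⟨n - 1 - j % n, lt_of_le_of_lt (Nat.sub_le _ _) (Nat.sub_lt hn one_pos)⟩

/-- The sequence `(a₁, …, a_{2n}) = (p_n + p_n', q_n, …, p_1 + p_1', q_1)` as a list. -/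
def aList (n : ℕ) (hn : 0 < n) (P P' Q : Fin n → ℕ) : List ℕ :=
  (List.range n).flatMap fun i => [P (blk n hn i) + P' (blk n hn i), Q (blk n hn i)]

/-- `isH0 n hn P P' Q h0` says that `h0` is the number `h_{p,0}`: a real number in `(0,1)`
that is a fixed point of `x ↦ 1/(a₁ + 1/(a₂ + ⋯ + 1/(a_{2n} + x)))` (there is exactly one). -/
def isH0 (n : ℕ) (hn : 0 < n) (P P' Q : Fin n → ℕ) (h0 : ℝ) : Prop :=
  h0 ∈ Set.Ioo (0 : ℝ) 1 ∧ cf (aList n hn P P' Q) h0 = h0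

/-- The pair `(w_{p,j}, h_{p,j})`, with `w_{p,0} = 1`, `h_{p,0} = h0`, and for `j ≥ 1`:
`w_{p,j} = w_{p,j-1} − (p_{k(j)} + p'_{k(j)}) h_{p,j-1}`, `h_{p,j} = h_{p,j-1} − q_{k(j)} w_{p,j}`. -/
def wh (n : ℕ) (hn : 0 < n) (P P' Q : Fin n → ℕ) (h0 : ℝ) : ℕ → ℝ × ℝ
  | 0 => (1, h0)
  | j + 1 =>
    let prev := wh n hn P P' Q h0 j
    let b := blk n hn j
    let w := prev.1 - ((P b : ℝ) + (P' b : ℝ)) * prev.2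
    (w, prev.2 - (Q b : ℝ) * w)

/-- The width `w_{p,j}`. -/
def wseq (n : ℕ) (hn : 0 < n) (P P' Q : Fin n → ℕ) (h0 : ℝ) (j : ℕ) : ℝ :=
  (wh n hn P P' Q h0 j).1

/-- The height `h_{p,j}`. -/
def hseq (n : ℕ) (hn : 0 < n) (P P' Q : Fin n → ℕ) (h0 : ℝ) (j : ℕ) : ℝ :=
  (wh n hn P P' Q h0 j).2

/-- The split ratio `s_p = Σ_{i=0}^∞ p_{k(i+1)} h_{p,i}`. -/
def splitRatio (n : ℕ) (hn : 0 < n) (P P' Q : Fin n → ℕ) (h0 : ℝ) : ℝ :=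
  ∑' i : ℕ, (P (blk n hn i) : ℝ) * hseq n hn P P' Q h0 i

/-- The reindexing realizing the shift `T`: the tuple `T(p)` is given by the functions
`P ∘ shiftIdx n hn`, `P' ∘ shiftIdx n hn`, `Q ∘ shiftIdx n hn`. -/
def shiftIdx (n : ℕ) (hn : 0 < n) (i : Fin n) : Fin n :=
  ⟨(i.val + (n - 1)) % n, Nat.mod_lt _ hn⟩

/-! The fixed-point equation for `h_{p,0}` splits as `h_{p,0} = 1/(c + 1/(q + y))`, where
`c = p_n + p_n'`, `q = q_n` and `y` is the continued fraction of the remaining `2n - 2` entries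
evaluated at `h_{p,0}`. Rotating the list shows that `y = h_{T(p),0}`, and unfolding the two
outer levels gives `w_{p,1} = h_{p,0}/(q + y) > 0` and `h_{p,1} = w_{p,1} h_{T(p),0}`. The
recursion for `(w, h)` is linear, so `(w_{p,j+1}, h_{p,j+1}) = w_{p,1} (w_{T(p),j}, h_{T(p),j})`;
by induction along the shift all `w_{p,j}, h_{p,j}` are positive, and since
`(p + p') h_{p,j} = w_{p,j} - w_{p,j+1}` the series `s_p` telescopes to a sum bounded by `1`.
Splitting off its first term gives `s_p = p_n h_{p,0} + w_{p,1} s_{T(p)}`, and together with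
`h_{p,0} = w_{p,1} (q + h_{T(p),0})` this is the one-block identity. -/

section ContinuedFraction

lemma cf_cons (a : ℕ) (l : List ℕ) (x : ℝ) : cf (a :: l) x = 1 / (a + cf l x) := rfl

lemma cf_append (l₁ l₂ : List ℕ) (x : ℝ) : cf (l₁ ++ l₂) x = cf l₁ (cf l₂ x) := by
  simp [cf]

lemma cf_pos (l : List ℕ) {x : ℝ} (hx : 0 < x) : 0 < cf l x := by
  induction l with
  | nil => exact hx
  | cons a l ih => rw [cf_cons]; positivity

lemma cf_cons_lt_one {a : ℕ} (ha : 1 ≤ a) (l : List ℕ) {x : ℝ} (hx : 0 < x) :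
    cf (a :: l) x < 1 := by
  have ha' : (1 : ℝ) ≤ a := by exact_mod_cast ha
  rw [cf_cons, div_lt_one (by linarith [cf_pos l hx])]
  linarith [cf_pos l hx]

lemma cf_mem_Ioo {l : List ℕ} (hl : ∀ a ∈ l, 1 ≤ a) {x : ℝ} (hx : x ∈ Set.Ioo 0 1) :
    cf l x ∈ Set.Ioo 0 1 := by
  cases l with
  | nil => exact hx
  | cons a l => exact ⟨cf_pos _ hx.1, cf_cons_lt_one (hl a List.mem_cons_self) l hx.1⟩

lemma abs_one_div_add_sub_lt {a u v : ℝ} (ha : 1 ≤ a) (hu : 0 < u) (hv : 0 < v) (huv : u ≠ v) :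
    |1 / (a + u) - 1 / (a + v)| < |u - v| := by
  have hden : 1 < (a + u) * (a + v) := by nlinarith
  rw [show 1 / (a + u) - 1 / (a + v) = (v - u) / ((a + u) * (a + v)) by
    field_simp; ring, abs_div, abs_of_pos (by positivity : 0 < (a + u) * (a + v)), abs_sub_comm]
  exact div_lt_self (abs_pos.mpr (sub_ne_zero.mpr huv)) hden

lemma abs_one_div_add_sub_le {a u v : ℝ} (ha : 1 ≤ a) (hu : 0 < u) (hv : 0 < v) :
    |1 / (a + u) - 1 / (a + v)| ≤ |u - v| := by
  rcases eq_or_ne u v with rfl | huv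
  · simp
  · exact (abs_one_div_add_sub_lt ha hu hv huv).le

lemma cf_cons_abs_sub_lt {x y : ℝ} (hx : 0 < x) (hy : 0 < y) (hxy : x ≠ y) :
    ∀ (a : ℕ) (l : List ℕ), (∀ b ∈ a :: l, 1 ≤ b) →
      |cf (a :: l) x - cf (a :: l) y| < |x - y|
  | a, [], hl => abs_one_div_add_sub_lt (by exact_mod_cast hl a List.mem_cons_self) hx hy hxy
  | a, b :: l, hl =>
    (abs_one_div_add_sub_le (by exact_mod_cast hl a List.mem_cons_self)
      (cf_pos _ hx) (cf_pos _ hy)).trans_lt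
      (cf_cons_abs_sub_lt hx hy hxy b l fun c hc => hl c (List.mem_cons_of_mem a hc))

lemma cf_fixedPt_unique {l : List ℕ} (hne : l ≠ []) (hl : ∀ a ∈ l, 1 ≤ a) {x y : ℝ}
    (hx : 0 < x) (hy : 0 < y) (hfx : cf l x = x) (hfy : cf l y = y) : x = y := by
  obtain ⟨a, l, rfl⟩ := List.exists_cons_of_ne_nil hne
  by_contra hxy
  have h := cf_cons_abs_sub_lt hx hy hxy a l hl
  rw [hfx, hfy] at h
  exact lt_irrefl _ h

end ContinuedFraction

section Indices

variable {n : ℕ} (hn : 0 < n)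

lemma blk_zero : blk n hn 0 = ⟨n - 1, Nat.sub_lt hn one_pos⟩ := by
  simp [blk]

lemma blk_self : blk n hn n = blk n hn 0 := by
  simp [blk]

lemma shiftIdx_blk (j : ℕ) : shiftIdx n hn (blk n hn j) = blk n hn (j + 1) := by
  apply Fin.ext
  simp only [shiftIdx, blk]
  have hr : j % n < n := Nat.mod_lt _ hn
  rw [show (j + 1) % n = (j % n + 1) % n from ((Nat.mod_modEq j n).add_right 1).symm]
  generalize j % n = r at hr ⊢
  rcases Nat.lt_or_ge (r + 1) n with hlt | hge
  · rw [Nat.mod_eq_of_lt hlt, show n - 1 - r + (n - 1) = n - 1 - (r + 1) + n by omega,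
      Nat.add_mod_right, Nat.mod_eq_of_lt (by omega)]
  · rw [show r + 1 = n by omega, Nat.mod_self, show n - 1 - r + (n - 1) = n - 1 by omega,
      Nat.mod_eq_of_lt (by omega), Nat.sub_zero]

lemma shiftIdx_surjective : Function.Surjective (shiftIdx n hn) := by
  intro j
  refine ⟨⟨(j.val + 1) % n, Nat.mod_lt _ hn⟩, Fin.ext ?_⟩
  simp only [shiftIdx]
  rw [Nat.add_mod, Nat.mod_mod, ← Nat.add_mod, add_assoc, show 1 + (n - 1) = n by omega,
    Nat.add_mod_right, Nat.mod_eq_of_lt j.isLt]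

end Indices

section Tuple

def aListTail (n : ℕ) (hn : 0 < n) (P P' Q : Fin n → ℕ) : List ℕ :=
  (List.range (n - 1)).flatMap fun i =>
    [P (blk n hn (i + 1)) + P' (blk n hn (i + 1)), Q (blk n hn (i + 1))]

variable {n : ℕ} (hn : 0 < n) {P P' Q : Fin n → ℕ}

lemma memI.comp_shiftIdx (hI : memI n P P' Q) :
    memI n (P ∘ shiftIdx n hn) (P' ∘ shiftIdx n hn) (Q ∘ shiftIdx n hn) := by
  obtain ⟨hQ, hPP', ⟨j, hj⟩, ⟨k, hk⟩⟩ := hI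
  obtain ⟨j', rfl⟩ := shiftIdx_surjective hn j
  obtain ⟨k', rfl⟩ := shiftIdx_surjective hn k
  exact ⟨fun i => hQ _, fun i => hPP' _, ⟨j', hj⟩, ⟨k', hk⟩⟩

lemma aList_eq_cons :
    aList n hn P P' Q
      = (P (blk n hn 0) + P' (blk n hn 0)) :: Q (blk n hn 0) :: aListTail n hn P P' Q := by
  obtain ⟨m, rfl⟩ := Nat.exists_eq_add_one_of_ne_zero hn.ne'
  simp [aList, aListTail, List.range_succ_eq_map, List.flatMap_map]

lemma aList_comp_shiftIdx :
    aList n hn (P ∘ shiftIdx n hn) (P' ∘ shiftIdx n hn) (Q ∘ shiftIdx n hn)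
      = aListTail n hn P P' Q ++ [P (blk n hn 0) + P' (blk n hn 0), Q (blk n hn 0)] := by
  obtain ⟨m, rfl⟩ := Nat.exists_eq_add_one_of_ne_zero hn.ne'
  simp [aList, aListTail, List.range_succ, shiftIdx_blk, blk_self]

lemma one_le_of_mem_aList (hI : memI n P P' Q) : ∀ a ∈ aList n hn P P' Q, 1 ≤ a := by
  simp only [aList, List.mem_flatMap, List.mem_cons, List.not_mem_nil, or_false]
  rintro a ⟨i, -, rfl | rfl⟩
  exacts [hI.2.1 _, hI.1 _]

lemma isH0_unique (hI : memI n P P' Q) {x y : ℝ} (hx : isH0 n hn P P' Q x)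
    (hy : isH0 n hn P P' Q y) : x = y :=
  cf_fixedPt_unique (by simp [aList_eq_cons]) (one_le_of_mem_aList hn hI)
    hx.1.1 hy.1.1 hx.2 hy.2

lemma isH0_comp_shiftIdx (hI : memI n P P' Q) {h0 : ℝ} (hh0 : isH0 n hn P P' Q h0) :
    isH0 n hn (P ∘ shiftIdx n hn) (P' ∘ shiftIdx n hn) (Q ∘ shiftIdx n hn)
      (cf (aListTail n hn P P' Q) h0) := by
  have hfix := hh0.2
  rw [aList_eq_cons] at hfix
  refine ⟨cf_mem_Ioo (fun a ha => ?_) hh0.1, ?_⟩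
  · exact one_le_of_mem_aList hn hI a (by simp [aList_eq_cons, ha])
  · rw [aList_comp_shiftIdx, cf_append]
    exact congrArg _ hfix

end Tuple

lemma one_sub_mul_eq_div {c q y h : ℝ} (hc : 0 ≤ c) (hqy : 0 < q + y)
    (hh : h = 1 / (c + 1 / (q + y))) : 1 - c * h = h / (q + y) := by
  subst hh
  field_simp
  ring

section WidthHeight

variable {n : ℕ} (hn : 0 < n) {P P' Q : Fin n → ℕ} {h0 : ℝ}

lemma wh_succ (j : ℕ) :
    wh n hn P P' Q h0 (j + 1)
      = ((wh n hn P P' Q h0 j).1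
            - ((P (blk n hn j) : ℝ) + P' (blk n hn j)) * (wh n hn P P' Q h0 j).2,
          (wh n hn P P' Q h0 j).2 - Q (blk n hn j) * ((wh n hn P P' Q h0 j).1
            - ((P (blk n hn j) : ℝ) + P' (blk n hn j)) * (wh n hn P P' Q h0 j).2)) :=
  rfl

lemma wseq_succ (j : ℕ) :
    wseq n hn P P' Q h0 (j + 1)
      = wseq n hn P P' Q h0 j - ((P (blk n hn j) : ℝ) + P' (blk n hn j)) * hseq n hn P P' Q h0 j :=
  rfl

lemma wseq_one : wseq n hn P P' Q h0 1 = 1 - ((P (blk n hn 0) : ℝ) + P' (blk n hn 0)) * h0 :=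
  rfl

lemma wseq_one_eq_div (hh0 : isH0 n hn P P' Q h0) :
    wseq n hn P P' Q h0 1 = h0 / (Q (blk n hn 0) + cf (aListTail n hn P P' Q) h0) := by
  have hfix := hh0.2
  rw [aList_eq_cons, cf_cons, cf_cons] at hfix
  push_cast at hfix
  have hy := cf_pos (aListTail n hn P P' Q) hh0.1.1
  exact one_sub_mul_eq_div (by positivity) (by positivity) hfix.symm

lemma wseq_one_pos (hh0 : isH0 n hn P P' Q h0) : 0 < wseq n hn P P' Q h0 1 := by
  rw [wseq_one_eq_div hn hh0]
  exact div_pos hh0.1.1 (by have := cf_pos (aListTail n hn P P' Q) hh0.1.1; positivity)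

lemma eq_wseq_one_mul (hh0 : isH0 n hn P P' Q h0) :
    h0 = wseq n hn P P' Q h0 1 * (Q (blk n hn 0) + cf (aListTail n hn P P' Q) h0) := by
  have hy := cf_pos (aListTail n hn P P' Q) hh0.1.1
  rw [wseq_one_eq_div hn hh0, div_mul_cancel₀ _ (by positivity)]

lemma hseq_one_eq_mul (hh0 : isH0 n hn P P' Q h0) :
    hseq n hn P P' Q h0 1 = wseq n hn P P' Q h0 1 * cf (aListTail n hn P P' Q) h0 := by
  change h0 - Q (blk n hn 0) * wseq n hn P P' Q h0 1 = _
  linear_combination eq_wseq_one_mul hn hh0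

lemma smul_wh_comp_shiftIdx {y : ℝ}
    (hy : hseq n hn P P' Q h0 1 = wseq n hn P P' Q h0 1 * y) (j : ℕ) :
    wseq n hn P P' Q h0 1 • wh n hn (P ∘ shiftIdx n hn) (P' ∘ shiftIdx n hn) (Q ∘ shiftIdx n hn) y j
      = wh n hn P P' Q h0 (j + 1) := by
  induction j with
  | zero => exact Prod.ext (mul_one _) hy.symm
  | succ j ih =>
    rw [wh_succ hn (j + 1), ← ih, wh_succ]
    simp only [Function.comp_apply, shiftIdx_blk, Prod.smul_mk, Prod.smul_fst, Prod.smul_snd,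
      smul_eq_mul]
    ext <;> ring

lemma wseq_pos_and_hseq_pos (hI : memI n P P' Q) (hh0 : isH0 n hn P P' Q h0) (j : ℕ) :
    0 < wseq n hn P P' Q h0 j ∧ 0 < hseq n hn P P' Q h0 j := by
  induction j generalizing P P' Q h0 with
  | zero => exact ⟨one_pos, hh0.1.1⟩
  | succ j ih =>
    obtain ⟨hw, hh⟩ := ih (hI.comp_shiftIdx hn) (isH0_comp_shiftIdx hn hI hh0)
    rw [wseq, hseq, ← smul_wh_comp_shiftIdx hn (hseq_one_eq_mul hn hh0)]
    exact ⟨mul_pos (wseq_one_pos hn hh0) hw, mul_pos (wseq_one_pos hn hh0) hh⟩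

/-- The terms are bounded by `(p + p') h_{p,i} = w_{p,i} - w_{p,i+1}`, which telescopes. -/
lemma summable_splitRatio (hI : memI n P P' Q) (hh0 : isH0 n hn P P' Q h0) :
    Summable fun i => (P (blk n hn i) : ℝ) * hseq n hn P P' Q h0 i := by
  have hpos := wseq_pos_and_hseq_pos hn hI hh0
  refine summable_of_sum_range_le (c := 1)
    (fun i => mul_nonneg (Nat.cast_nonneg _) (hpos i).2.le) fun N => ?_
  calc ∑ i ∈ Finset.range N, (P (blk n hn i) : ℝ) * hseq n hn P P' Q h0 i
      ≤ ∑ i ∈ Finset.range N, (wseq n hn P P' Q h0 i - wseq n hn P P' Q h0 (i + 1)) := by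
        refine Finset.sum_le_sum fun i _ => ?_
        rw [wseq_succ, sub_sub_cancel, add_mul]
        exact le_add_of_nonneg_right (mul_nonneg (Nat.cast_nonneg _) (hpos i).2.le)
    _ = 1 - wseq n hn P P' Q h0 N := Finset.sum_range_sub' _ _
    _ ≤ 1 := by linarith [hpos N]

lemma splitRatio_eq_add_mul (hI : memI n P P' Q) (hh0 : isH0 n hn P P' Q h0) :
    splitRatio n hn P P' Q h0
      = P (blk n hn 0) * h0 + wseq n hn P P' Q h0 1
          * splitRatio n hn (P ∘ shiftIdx n hn) (P' ∘ shiftIdx n hn) (Q ∘ shiftIdx n hn)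
              (cf (aListTail n hn P P' Q) h0) := by
  rw [splitRatio, (summable_splitRatio hn hI hh0).tsum_eq_zero_add, splitRatio,
    ← tsum_mul_left]
  congr 1
  refine tsum_congr fun j => ?_
  rw [hseq, ← smul_wh_comp_shiftIdx hn (hseq_one_eq_mul hn hh0) j, Function.comp_apply,
    shiftIdx_blk, Prod.smul_snd, smul_eq_mul, hseq]
  ring

end WidthHeight

lemma M1_pow_mulVec (a : ℕ) (x y z : ℝ) : M1 ^ a *ᵥ ![x, y, z] = ![x + a * y, y, z] := by
  induction a with
  | zero => simp
  | succ a ih =>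
    rw [pow_succ', ← mulVec_mulVec, ih]
    ext i
    fin_cases i <;>
      simp only [M1, mulVec, dotProduct, Fin.sum_univ_three, of_apply, cons_val', cons_val_fin_one,
        cons_val_zero, cons_val_one, cons_val, Fin.zero_eta, Fin.mk_one, Fin.reduceFinMk,
        Nat.cast_succ] <;>
      ring

lemma M2_pow_mulVec (q : ℕ) (x y z : ℝ) : M2 ^ q *ᵥ ![x, y, z] = ![x, q * (x + z) + y, z] := by
  induction q with
  | zero => simp
  | succ q ih =>
    rw [pow_succ', ← mulVec_mulVec, ih]
    ext i
    fin_cases i <;>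
      simp only [M2, mulVec, dotProduct, Fin.sum_univ_three, of_apply, cons_val', cons_val_fin_one,
        cons_val_zero, cons_val_one, cons_val, Fin.zero_eta, Fin.mk_one, Fin.reduceFinMk,
        Nat.cast_succ] <;>
      ring

lemma M3_pow_mulVec (b : ℕ) (x y z : ℝ) : M3 ^ b *ᵥ ![x, y, z] = ![x, y, b * y + z] := by
  induction b with
  | zero => simp
  | succ b ih =>
    rw [pow_succ', ← mulVec_mulVec, ih]
    ext i
    fin_cases i <;>
      simp only [M3, mulVec, dotProduct, Fin.sum_univ_three, of_apply, cons_val', cons_val_fin_one,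
        cons_val_zero, cons_val_one, cons_val, Fin.zero_eta, Fin.mk_one, Fin.reduceFinMk,
        Nat.cast_succ] <;>
      ring

/-- `w_{p,1} = 1 − (p_n + p_n') h_{p,0} > 0` and the one-block identity
`M1^{p_n} M3^{p_n'} M2^{q_n} · (s_{T(p)}, h_{T(p),0}, 1 − s_{T(p)})ᵀ
  = (1/w_{p,1}) · (s_p, h_{p,0}, 1 − s_p)ᵀ`, where `T(p)` is the shift of `p`. -/
theorem stmt6 (n : ℕ) (hn : 0 < n) (P P' Q : Fin n → ℕ) (hI : memI n P P' Q)
    (h0 h0' : ℝ) (hh0 : isH0 n hn P P' Q h0)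
    (hh0' : isH0 n hn (P ∘ shiftIdx n hn) (P' ∘ shiftIdx n hn) (Q ∘ shiftIdx n hn) h0') :
    wseq n hn P P' Q h0 1
        = 1 - ((P ⟨n - 1, Nat.sub_lt hn one_pos⟩ : ℝ)
            + (P' ⟨n - 1, Nat.sub_lt hn one_pos⟩ : ℝ)) * h0 ∧
    0 < wseq n hn P P' Q h0 1 ∧
    (M1 ^ P ⟨n - 1, Nat.sub_lt hn one_pos⟩ * M3 ^ P' ⟨n - 1, Nat.sub_lt hn one_pos⟩
        * M2 ^ Q ⟨n - 1, Nat.sub_lt hn one_pos⟩) *ᵥ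
      ![splitRatio n hn (P ∘ shiftIdx n hn) (P' ∘ shiftIdx n hn) (Q ∘ shiftIdx n hn) h0',
        h0',
        1 - splitRatio n hn (P ∘ shiftIdx n hn) (P' ∘ shiftIdx n hn) (Q ∘ shiftIdx n hn) h0']
      = (1 / wseq n hn P P' Q h0 1) •
        ![splitRatio n hn P P' Q h0, h0, 1 - splitRatio n hn P P' Q h0] := by
  obtain rfl := isH0_unique hn (hI.comp_shiftIdx hn) hh0' (isH0_comp_shiftIdx hn hI hh0)
  have hw := wseq_one_pos hn hh0
  have hh := eq_wseq_one_mul hn hh0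
  have hs := splitRatio_eq_add_mul hn hI hh0
  rw [← blk_zero hn]
  refine ⟨wseq_one hn, hw, ?_⟩
  rw [← mulVec_mulVec, ← mulVec_mulVec, M2_pow_mulVec, M3_pow_mulVec, M1_pow_mulVec, eq_comm,
    one_div, inv_smul_eq_iff₀ hw.ne']
  ext i
  fin_cases i <;> simp only [Fin.zero_eta, Fin.mk_one, Fin.reduceFinMk, cons_val_zero, cons_val_one,
    cons_val, Pi.smul_apply, smul_eq_mul]
  · linear_combination hs + (P (blk n hn 0) : ℝ) * hh
  · linear_combination hh
  · linear_combination -hs + (P' (blk n hn 0) : ℝ) * hh - wseq_one hn
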